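/- If F1 and F2 are polynomials with real coefficients such that F1(z)·F1(z^{-1}) = F2(z)·F2(z^{-1}) as Laurent polynomials, then there exist polynomials G and H with real coefficients such that F1(z) = G(z)·H(z) and F2(z) = c·z^m·G(z)·H(z^{-1}) for some nonzero real constant c and some integer m. -/
import Mathlib
open Polynomial

lemma reflect_reflect' {R : Type*} [Semiring R] (N : ℕ) (p : R[X]) :
    reflect N (reflect N p) = p := by
  ext n; rw [coeff_reflect, coeff_reflect, revAt_invol]

lemma reverse_reverse' (p : ℝ[X]) (hp : p.coeff 0 ≠ 0) : p.reverse.reverse = p := by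
  have h0 : p.natTrailingDegree = 0 := natTrailingDegree_eq_zero.2 (Or.inr hp)
  have hd : p.reverse.natDegree = p.natDegree := by
    rw [reverse_natDegree, h0, Nat.sub_zero]
  rw [reverse, hd, reverse, reflect_reflect']

lemma x_pow_cancel_aux {s t : ℕ} {u v : ℝ[X]} (h : X ^ s * u = X ^ t * v) (hst : s ≤ t)
    (hu : u.coeff 0 ≠ 0) (hv : v.coeff 0 ≠ 0) : u = v := by
  have hx : (X : ℝ[X]) ^ s ≠ 0 := pow_ne_zero _ X_ne_zero
  have h2 : X ^ s * u = X ^ s * (X ^ (t - s) * v) := by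
    rw [h, ← mul_assoc, ← pow_add]
    congr 2
    omega
  have h3 : u = X ^ (t - s) * v := mul_left_cancel₀ hx h2
  have h4 : u.coeff 0 = ((X : ℝ[X]) ^ (t - s)).coeff 0 * v.coeff 0 := by
    rw [← mul_coeff_zero, ← h3]
  rcases Nat.eq_zero_or_pos (t - s) with h5 | h5
  · rw [h5, pow_zero, one_mul] at h3; exact h3
  · rw [coeff_X_pow] at h4
    simp only [Nat.ne_of_lt h5, if_neg (by omega : ¬ (0 = t - s))] at h4
    simp at h4
    exact absurd h4 hu

lemma x_pow_cancel {s t : ℕ} {u v : ℝ[X]} (h : X ^ s * u = X ^ t * v)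
    (hu : u.coeff 0 ≠ 0) (hv : v.coeff 0 ≠ 0) : u = v := by
  rcases le_total s t with hst | hst
  · exact x_pow_cancel_aux h hst hu hv
  · exact (x_pow_cancel_aux h.symm hst hv hu).symm

lemma key_zero (A B : ℝ[X]) (hdA : A.natDegree = 0) (hA0 : A.coeff 0 ≠ 0)
    (hB0 : B.coeff 0 ≠ 0) (heq : A * A.reverse = B * B.reverse) :
    ∃ (G H : ℝ[X]) (c : ℝ), c ≠ 0 ∧ A = G * H ∧ B = c • (G * H.reverse) := by
  have hA : A ≠ 0 := fun h => hA0 (by simp [h])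
  have hB : B ≠ 0 := fun h => hB0 (by simp [h])
  have hdB : B.natDegree = 0 := by
    have h1 : (A * A.reverse).natDegree = 0 := by
      have := natDegree_mul hA (reverse_eq_zero.not.2 hA)
      have hrA : A.reverse.natDegree ≤ A.natDegree := reverse_natDegree_le A
      omega
    rw [heq, natDegree_mul hB (reverse_eq_zero.not.2 hB)] at h1
    omega
  refine ⟨1, A, B.coeff 0 / A.coeff 0, div_ne_zero hB0 hA0, (one_mul A).symm, ?_⟩
  rw [one_mul, eq_C_of_natDegree_eq_zero hdA, eq_C_of_natDegree_eq_zero hdB, reverse_C, smul_C]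
  simp only [coeff_C_zero, smul_eq_mul]
  rw [div_mul_cancel₀ _ hA0]

lemma key_lemma : ∀ (n : ℕ) (A B : ℝ[X]), A.natDegree ≤ n → A.coeff 0 ≠ 0 → B.coeff 0 ≠ 0 →
    A * A.reverse = B * B.reverse →
    ∃ (G H : ℝ[X]) (c : ℝ), c ≠ 0 ∧ A = G * H ∧ B = c • (G * H.reverse) := by
  intro n
  induction n with
  | zero =>
    intro A B hdeg hA0 hB0 heq
    exact key_zero A B (Nat.le_zero.1 hdeg) hA0 hB0 heq
  | succ n ih =>
    intro A B hdeg hA0 hB0 heq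
    have hA : A ≠ 0 := fun h => hA0 (by simp [h])
    have hB : B ≠ 0 := fun h => hB0 (by simp [h])
    rcases Nat.eq_zero_or_pos A.natDegree with hdA | hdA
    · exact key_zero A B hdA hA0 hB0 heq
    obtain ⟨p, hpirr, A₁, hA₁⟩ :=
      WfDvdMonoid.exists_irreducible_factor (not_isUnit_of_natDegree_pos A hdA) hA
    have hp0 : p.coeff 0 ≠ 0 := by
      intro h; apply hA0; rw [hA₁, mul_coeff_zero, h, zero_mul]
    have hA₁0 : A₁.coeff 0 ≠ 0 := by
      intro h; apply hA0; rw [hA₁, mul_coeff_zero, h, mul_zero]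
    have hp : p ≠ 0 := fun h => hp0 (by simp [h])
    have hA₁ne : A₁ ≠ 0 := fun h => hA₁0 (by simp [h])
    have hpd : 0 < p.natDegree := hpirr.natDegree_pos
    have hA₁deg : A₁.natDegree ≤ n := by
      have := natDegree_mul hp hA₁ne
      rw [← hA₁] at this
      omega
    have hprime : Prime p := hpirr.prime
    have hpr : p.reverse ≠ 0 := reverse_eq_zero.not.2 hp
    have heq' : (p * p.reverse) * (A₁ * A₁.reverse) = B * B.reverse := by
      rw [← heq, hA₁, reverse_mul_of_domain]; ring
    have hdvd : p ∣ B * B.reverse := ⟨p.reverse * (A₁ * A₁.reverse), by rw [← heq']; ring⟩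
    rcases hprime.dvd_mul.mp hdvd with ⟨B₁, hB₁⟩ | ⟨B₁, hB₁⟩
    · -- p ∣ B
      have hB₁0 : B₁.coeff 0 ≠ 0 := by
        intro h; apply hB0; rw [hB₁, mul_coeff_zero, h, mul_zero]
      have heq₁ : A₁ * A₁.reverse = B₁ * B₁.reverse := by
        apply mul_left_cancel₀ (mul_ne_zero hp hpr)
        rw [heq', hB₁, reverse_mul_of_domain]; ring
      obtain ⟨G, H, c, hc, hGH, hGH2⟩ := ih A₁ B₁ hA₁deg hA₁0 hB₁0 heq₁
      refine ⟨p * G, H, c, hc, by rw [hA₁, hGH, mul_assoc], ?_⟩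
      rw [hB₁, hGH2, smul_eq_C_mul, smul_eq_C_mul]; ring
    · -- p ∣ B.reverse
      have hBr0 : B.reverse.coeff 0 ≠ 0 := by
        rw [coeff_zero_reverse]; exact leadingCoeff_ne_zero.2 hB
      have hB₁0 : B₁.coeff 0 ≠ 0 := by
        intro h; apply hBr0; rw [hB₁, mul_coeff_zero, h, mul_zero]
      have hB₁ne : B₁ ≠ 0 := fun h => hB₁0 (by simp [h])
      have hBeq : B = p.reverse * B₁.reverse := by
        rw [← reverse_reverse' B hB0, hB₁, reverse_mul_of_domain]
      have hC0 : B₁.reverse.coeff 0 ≠ 0 := by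
        rw [coeff_zero_reverse]; exact leadingCoeff_ne_zero.2 hB₁ne
      have heq₁ : A₁ * A₁.reverse = B₁.reverse * B₁.reverse.reverse := by
        apply mul_left_cancel₀ (mul_ne_zero hp hpr)
        rw [heq', reverse_reverse' B₁ hB₁0, hB₁, hBeq]
        ring
      obtain ⟨G, H, c, hc, hGH, hGH2⟩ := ih A₁ B₁.reverse hA₁deg hA₁0 hC0 heq₁
      refine ⟨G, p * H, c, hc, by rw [hA₁, hGH]; ring, ?_⟩
      rw [hBeq, hGH2, reverse_mul_of_domain, smul_eq_C_mul, smul_eq_C_mul]; ring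

/-- If F1 and F2 are nonzero real polynomials with F1(z)·F1(z⁻¹) = F2(z)·F2(z⁻¹) as Laurent
polynomials (equivalently, F1·reverse F1·X^(deg F2) = F2·reverse F2·X^(deg F1)), then there
exist real polynomials G and H and a nonzero real constant c with F1 = G·H and
F2(z) = c·z^m·G(z)·H(z⁻¹) for some integer m (encoded as F2·X^m1 = c•(X^m2·G·reverse H)). -/
theorem stmt_4 (F1 F2 : Polynomial ℝ) (hF1 : F1 ≠ 0) (hF2 : F2 ≠ 0)
    (h : F1 * F1.reverse * X ^ F2.natDegree = F2 * F2.reverse * X ^ F1.natDegree) :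
    ∃ (G H : Polynomial ℝ) (c : ℝ) (m1 m2 : ℕ), c ≠ 0 ∧ F1 = G * H ∧
      F2 * X ^ m1 = c • (X ^ m2 * G * H.reverse) := by
  set a1 := F1.rootMultiplicity 0 with ha1
  set a2 := F2.rootMultiplicity 0 with ha2
  set A := F1 /ₘ (X - C 0) ^ a1 with hAdef
  set B := F2 /ₘ (X - C 0) ^ a2 with hBdef
  have hFA : (X - C (0:ℝ)) ^ a1 * A = F1 := pow_mul_divByMonic_rootMultiplicity_eq F1 0
  have hFB : (X - C (0:ℝ)) ^ a2 * B = F2 := pow_mul_divByMonic_rootMultiplicity_eq F2 0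
  rw [map_zero, sub_zero] at hFA hFB
  have hA0 : A.coeff 0 ≠ 0 := by
    have := eval_divByMonic_pow_rootMultiplicity_ne_zero (p := F1) 0 hF1
    rwa [← coeff_zero_eq_eval_zero] at this
  have hB0 : B.coeff 0 ≠ 0 := by
    have := eval_divByMonic_pow_rootMultiplicity_ne_zero (p := F2) 0 hF2
    rwa [← coeff_zero_eq_eval_zero] at this
  have hrevA : F1.reverse = A.reverse := by rw [← hFA, reverse_X_pow_mul]
  have hrevB : F2.reverse = B.reverse := by rw [← hFB, reverse_X_pow_mul]
  have h' : X ^ (a1 + F2.natDegree) * (A * A.reverse)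
      = X ^ (a2 + F1.natDegree) * (B * B.reverse) := by
    rw [pow_add, pow_add, ← hrevA, ← hrevB]
    calc X ^ a1 * X ^ F2.natDegree * (A * F1.reverse)
        = (X ^ a1 * A) * F1.reverse * X ^ F2.natDegree := by ring
      _ = (X ^ a2 * B) * F2.reverse * X ^ F1.natDegree := by rw [hFA, hFB, h]
      _ = X ^ a2 * X ^ F1.natDegree * (B * F2.reverse) := by ring
  have hAArev : A.coeff 0 * A.reverse.coeff 0 ≠ 0 := by
    rw [coeff_zero_reverse]
    exact mul_ne_zero hA0 (leadingCoeff_ne_zero.2 (fun h => hA0 (by simp [h])))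
  have hBBrev : B.coeff 0 * B.reverse.coeff 0 ≠ 0 := by
    rw [coeff_zero_reverse]
    exact mul_ne_zero hB0 (leadingCoeff_ne_zero.2 (fun h => hB0 (by simp [h])))
  have heq : A * A.reverse = B * B.reverse := by
    apply x_pow_cancel h' <;> rwa [mul_coeff_zero]
  obtain ⟨G, H, c, hc, hGH, hGH2⟩ := key_lemma A.natDegree A B le_rfl hA0 hB0 heq
  refine ⟨G, X ^ a1 * H, c, 0, a2, hc, ?_, ?_⟩
  · rw [← hFA, hGH]; ring
  · rw [pow_zero, mul_one, ← hFB, hGH2, reverse_X_pow_mul, smul_eq_C_mul, smul_eq_C_mul]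
    ring
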